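/- With notation as in the level-k setup, let N be a node whose nodal type is the conjugacy class C (i.e. g_{k+1}⋯g_r ∈ C for every (g_1,…,g_r) ∈ N), fix x_0 ∈ C, and let H and T be the head orbit and tail orbit of N. Then the shadow N_0 := {(g_1,…,g_r) ∈ N : g_{k+1}⋯g_r = x_0} is a single orbit of L_k × R_k × C_G(x_0), and for every g ∈ N_0 the head of g lies in the shadow H_0 and the tail of g lies in the shadow T_0. -/
import Mathlib


/-- The braid move `Q_i` (`0`-indexed): it replaces the entries in positions `i` and `i+1`
of a tuple `(g_0, …, g_{r-1})` by `g_{i+1}` and `g_{i+1}⁻¹ * g_i * g_{i+1}` respectively,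
leaving all other entries unchanged.  (For `i + 1 ≥ r` it is the identity.) -/
def braidMove {G : Type*} [Group G] {r : ℕ} (i : ℕ) (g : Fin r → G) : Fin r → G :=
  fun m =>
    if _hm : (m : ℕ) = i then
      if h : i + 1 < r then g ⟨i + 1, h⟩ else g m
    else if hm' : (m : ℕ) = i + 1 then
      (g m)⁻¹ * g ⟨i, by have := m.isLt; omega⟩ * g m
    else g m

/-- The braid relations on `n` generators `Q_0, …, Q_{n-1}`. -/
def braidRels (n : ℕ) : Set (FreeGroup (Fin n)) :=
  {w | (∃ i j : Fin n, (i : ℕ) + 1 = (j : ℕ) ∧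
          w = FreeGroup.of i * FreeGroup.of j * FreeGroup.of i *
              (FreeGroup.of j * FreeGroup.of i * FreeGroup.of j)⁻¹) ∨
       (∃ i j : Fin n, (i : ℕ) + 2 ≤ (j : ℕ) ∧
          w = FreeGroup.of i * FreeGroup.of j * (FreeGroup.of j * FreeGroup.of i)⁻¹)}

/-- The Artin braid group on `r` strings, presented by `r - 1` generators
subject to the braid relations. -/
abbrev BraidGroup (r : ℕ) : Type := PresentedGroup (braidRels (r - 1))

/-- Diagonal conjugation of a tuple by a group element `h`. -/
def diagConj {G : Type*} [Group G] {n : ℕ} (h : G) (g : Fin n → G) : Fin n → G :=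
  fun m => h⁻¹ * g m * h

/-- The set `T^o(C_1, …, C_r)` of generating product-one tuples with `τ_i ∈ C_i`
for every `i`. -/
def nielsenTuples {G : Type*} [Group G] {r : ℕ} (C : Fin r → Set G) : Set (Fin r → G) :=
  {τ | (∀ m, τ m ∈ C m) ∧ (List.ofFn τ).prod = 1 ∧ Subgroup.closure (Set.range τ) = ⊤}
/-- Membership in the parabolic subgroup `B_P`: a braid `b` lies in `B_P` iff the underlying
permutation `π b` preserves the class vector `C`. -/
def inBP {G : Type*} [Group G] {r : ℕ} (C : Fin r → Set G)
    (π : BraidGroup r →* Equiv.Perm (Fin r)) (b : BraidGroup r) : Prop :=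
  ∀ m : Fin r, C (π b m) = C m

/-- Generators of `L_k`: the braid generators `Q_m` with `m + 1 < k` (0-indexed),
touching only the first `k` strings. -/
def LkGens (r k : ℕ) : Set (BraidGroup r) :=
  {x | ∃ m : Fin (r - 1), (m : ℕ) + 1 < k ∧ x = PresentedGroup.of m}

/-- Generators of `R_k`: the braid generators `Q_m` with `k ≤ m` (0-indexed),
touching only the last `r - k` strings. -/
def RkGens (r k : ℕ) : Set (BraidGroup r) :=
  {x | ∃ m : Fin (r - 1), k ≤ (m : ℕ) ∧ x = PresentedGroup.of m}

/-- Membership in `L_k := ⟨Q_m : m + 1 < k⟩ ⊓ B_P`. -/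
def inLk {G : Type*} [Group G] {r : ℕ} (C : Fin r → Set G)
    (π : BraidGroup r →* Equiv.Perm (Fin r)) (k : ℕ) (b : BraidGroup r) : Prop :=
  b ∈ Subgroup.closure (LkGens r k) ∧ inBP C π b

/-- Membership in `R_k := ⟨Q_m : k ≤ m⟩ ⊓ B_P`. -/
def inRk {G : Type*} [Group G] {r : ℕ} (C : Fin r → Set G)
    (π : BraidGroup r →* Equiv.Perm (Fin r)) (k : ℕ) (b : BraidGroup r) : Prop :=
  b ∈ Subgroup.closure (RkGens r k) ∧ inBP C π b

/-- A node: an orbit of `L_k × R_k × G` on `T^o(C_1, …, C_r)`, where the braid group acts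
through `φ` and `G` acts by diagonal conjugation. -/
def IsNode {G : Type*} [Group G] {r : ℕ} (C : Fin r → Set G)
    (π : BraidGroup r →* Equiv.Perm (Fin r)) (φ : BraidGroup r →* Equiv.Perm (Fin r → G))
    (k : ℕ) (N : Set (Fin r → G)) : Prop :=
  ∃ τ₀ ∈ nielsenTuples C, N = {τ | ∃ l ρ : BraidGroup r, inLk C π k l ∧ inRk C π k ρ ∧
    ∃ h : G, τ = diagConj h (φ (l * ρ) τ₀)}

/-- The head of an `r`-tuple at level `k`: `(g_1, …, g_k, (g_1 ⋯ g_k)⁻¹)`. -/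
def headOf {G : Type*} [Group G] {r k : ℕ} (hk : k ≤ r) (g : Fin r → G) : Fin (k + 1) → G :=
  fun m => if h : (m : ℕ) < k then g ⟨(m : ℕ), lt_of_lt_of_le h hk⟩
    else (((List.ofFn g).take k).prod)⁻¹

/-- The tail of an `r`-tuple at level `k`: `(g_1 ⋯ g_k, g_{k+1}, …, g_r)`. -/
def tailOf {G : Type*} [Group G] {r k : ℕ} (hk : k ≤ r) (g : Fin r → G) :
    Fin (r - k + 1) → G :=
  fun m => if _h : (m : ℕ) = 0 then ((List.ofFn g).take k).prod
    else g ⟨k + (m : ℕ) - 1, by have := m.isLt; omega⟩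
section ShadowAux

variable {G : Type*} [Group G] {r : ℕ}

private lemma list_prod_decomp (l : List G) (i : ℕ) (h : i + 1 < l.length) :
    l.prod = (l.take i).prod *
      (l[i]'(by omega) * (l[i+1]'h * (l.drop (i+2)).prod)) := by
  conv_lhs => rw [← List.take_append_drop i l]
  rw [List.prod_append, List.drop_eq_getElem_cons (by omega : i < l.length),
    List.prod_cons, List.drop_eq_getElem_cons (l := l) h, List.prod_cons]

private lemma prod_eq_of_pair {l l' : List G} {i : ℕ} (hlen : l'.length = l.length)
    (hi : i + 1 < l.length)
    (heq : ∀ j (hj : j < l.length), j ≠ i → j ≠ i + 1 → l'[j]'(by omega) = l[j]'hj)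
    (hpair : l'[i]'(by omega) * l'[i+1]'(by omega) = l[i]'(by omega) * l[i+1]'hi) :
    l'.prod = l.prod := by
  have htake : l'.take i = l.take i := by
    apply List.ext_getElem (by simp [hlen])
    intro j h1 h2
    simp only [List.getElem_take]
    exact heq j (by simp at h2; omega) (by simp at h1; omega) (by simp at h1; omega)
  have hdrop : l'.drop (i+2) = l.drop (i+2) := by
    apply List.ext_getElem (by simp [hlen])
    intro j h1 h2
    simp only [List.getElem_drop]
    exact heq (i+2+j) (by simp at h2; omega) (by omega) (by omega)
  have hkey : l'[i]'(by omega) * (l'[i+1]'(by omega) * (l.drop (i+2)).prod)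
      = l[i]'(by omega) * (l[i+1]'hi * (l.drop (i+2)).prod) := by
    rw [← mul_assoc, ← mul_assoc, hpair]
  rw [list_prod_decomp l' i (by omega), htake, hdrop, hkey, ← list_prod_decomp l i hi]

private lemma braidMove_apply_ne (i : ℕ) (g : Fin r → G) (m : Fin r)
    (h1 : (m : ℕ) ≠ i) (h2 : (m : ℕ) ≠ i + 1) : braidMove i g m = g m := by
  unfold braidMove; rw [dif_neg h1, dif_neg h2]

private lemma braidMove_eq_self (i : ℕ) (h : ¬ i + 1 < r) (g : Fin r → G) :
    braidMove i g = g := by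
  funext m
  unfold braidMove
  rcases eq_or_ne (m : ℕ) i with hm | hm
  · rw [dif_pos hm, dif_neg h]
  · rw [dif_neg hm, dif_neg (by have := m.isLt; omega : (m : ℕ) ≠ i + 1)]

private lemma braidMove_apply_left (i : ℕ) (h : i + 1 < r) (g : Fin r → G) :
    braidMove i g ⟨i, by omega⟩ = g ⟨i+1, h⟩ := by
  unfold braidMove; rw [dif_pos rfl, dif_pos h]

private lemma braidMove_apply_right (i : ℕ) (h : i + 1 < r) (g : Fin r → G) :
    braidMove i g ⟨i+1, h⟩ = (g ⟨i+1, h⟩)⁻¹ * g ⟨i, by omega⟩ * g ⟨i+1, h⟩ := by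
  unfold braidMove
  rw [dif_neg (by omega : ¬ (i + 1 = i)), dif_pos rfl]

private lemma braidMove_prod (i : ℕ) (g : Fin r → G) :
    (List.ofFn (braidMove i g)).prod = (List.ofFn g).prod := by
  by_cases h : i + 1 < r
  · refine prod_eq_of_pair (i := i) (by simp) (by simpa using h) ?_ ?_
    · intro j hj h1 h2
      have hj' : j < r := by simpa using hj
      rw [List.getElem_ofFn, List.getElem_ofFn]
      exact braidMove_apply_ne i g ⟨j, hj'⟩ h1 h2
    · rw [List.getElem_ofFn, List.getElem_ofFn, List.getElem_ofFn, List.getElem_ofFn]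
      rw [braidMove_apply_left i h, braidMove_apply_right i h]
      group
  · rw [braidMove_eq_self i h]

private lemma braidMove_drop_prod (i k : ℕ) (hk : k ≤ i) (g : Fin r → G) :
    ((List.ofFn (braidMove i g)).drop k).prod = ((List.ofFn g).drop k).prod := by
  by_cases h : i + 1 < r
  · refine prod_eq_of_pair (i := i - k) (by simp) (by simp; omega) ?_ ?_
    · intro j hj h1 h2
      have hj' : k + j < r := by simp at hj; omega
      rw [List.getElem_drop, List.getElem_drop, List.getElem_ofFn, List.getElem_ofFn]
      exact braidMove_apply_ne i g ⟨k + j, hj'⟩ (show k + j ≠ i by omega)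
        (show k + j ≠ i + 1 by omega)
    · have e1 : k + (i - k) = i := by omega
      have e2 : k + (i - k + 1) = i + 1 := by omega
      rw [List.getElem_drop, List.getElem_drop, List.getElem_drop, List.getElem_drop]
      simp only [List.getElem_ofFn]
      have f1 : (⟨k + (i - k), by omega⟩ : Fin r) = ⟨i, by omega⟩ := by
        ext; simpa using e1
      have f2 : (⟨k + (i - k + 1), by omega⟩ : Fin r) = ⟨i + 1, h⟩ := by
        ext; simpa using e2
      rw [f1, f2, braidMove_apply_left i h, braidMove_apply_right i h]
      group
  · rw [braidMove_eq_self i h]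

private lemma prod_map_conj (h : G) (l : List G) :
    (l.map (fun x => h⁻¹ * x * h)).prod = h⁻¹ * l.prod * h := by
  induction l with
  | nil => simp
  | cons a t ih => simp only [List.map_cons, List.prod_cons, ih]; group

private lemma ofFn_diagConj (h : G) (g : Fin r → G) :
    List.ofFn (diagConj h g) = (List.ofFn g).map (fun x => h⁻¹ * x * h) := by
  rw [List.map_ofFn]; rfl

private lemma prod_ofFn_diagConj (h : G) (g : Fin r → G) :
    (List.ofFn (diagConj h g)).prod = h⁻¹ * (List.ofFn g).prod * h := by
  rw [ofFn_diagConj, prod_map_conj]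

private lemma drop_prod_ofFn_diagConj (k : ℕ) (h : G) (g : Fin r → G) :
    ((List.ofFn (diagConj h g)).drop k).prod
      = h⁻¹ * ((List.ofFn g).drop k).prod * h := by
  rw [ofFn_diagConj, ← List.map_drop, prod_map_conj]

private lemma diagConj_diagConj (a b : G) (g : Fin r → G) :
    diagConj a (diagConj b g) = diagConj (b * a) g := by
  funext m; simp [diagConj, mul_assoc]

private lemma diagConj_one (g : Fin r → G) : diagConj (1 : G) g = g := by
  funext m; simp [diagConj]

private lemma braidMove_diagConj (i : ℕ) (h : G) (g : Fin r → G) :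
    braidMove i (diagConj h g) = diagConj h (braidMove i g) := by
  funext m
  show braidMove i (diagConj h g) m = h⁻¹ * braidMove i g m * h
  by_cases h1 : (m : ℕ) = i
  · by_cases h2 : i + 1 < r
    · have hm : m = ⟨i, by omega⟩ := Fin.ext h1
      rw [hm, braidMove_apply_left i h2 (g := diagConj h g),
        braidMove_apply_left i h2 (g := g)]
      rfl
    · rw [braidMove_eq_self i h2, braidMove_eq_self i h2]; rfl
  · by_cases h2 : (m : ℕ) = i + 1
    · have h3 : i + 1 < r := h2 ▸ m.isLt
      have hm : m = ⟨i + 1, h3⟩ := Fin.ext h2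
      rw [hm, braidMove_apply_right i h3 (g := diagConj h g),
        braidMove_apply_right i h3 (g := g)]
      simp only [diagConj]
      group
    · rw [braidMove_apply_ne i (diagConj h g) m h1 h2,
        braidMove_apply_ne i g m h1 h2]
      rfl

section Phi

variable (φ : BraidGroup r →* Equiv.Perm (Fin r → G))
  (hφ : ∀ (m : Fin (r - 1)) (g : Fin r → G),
    φ (PresentedGroup.of m) g = braidMove (m : ℕ) g)

include hφ

private lemma phi_prod (b : BraidGroup r) (g : Fin r → G) :
    (List.ofFn (φ b g)).prod = (List.ofFn g).prod := by
  have hb : b ∈ Subgroup.closure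
      (Set.range (PresentedGroup.of : Fin (r-1) → BraidGroup r)) := by
    rw [PresentedGroup.closure_range_of]; trivial
  refine Subgroup.closure_induction
    (p := fun x _ => ∀ g : Fin r → G,
      (List.ofFn (φ x g)).prod = (List.ofFn g).prod) ?_ ?_ ?_ ?_ hb g
  · rintro x ⟨m, rfl⟩ g; rw [hφ]; exact braidMove_prod _ _
  · intro g; rw [map_one, Equiv.Perm.one_apply]
  · intro x y _ _ ihx ihy g
    rw [map_mul, Equiv.Perm.mul_apply, ihx, ihy]
  · intro x _ ih g
    have h1 := ih (φ x⁻¹ g)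
    rw [← Equiv.Perm.mul_apply, ← map_mul, mul_inv_cancel, map_one,
      Equiv.Perm.one_apply] at h1
    exact h1.symm

private lemma phi_diagConj (b : BraidGroup r) (h : G) (g : Fin r → G) :
    φ b (diagConj h g) = diagConj h (φ b g) := by
  have hb : b ∈ Subgroup.closure
      (Set.range (PresentedGroup.of : Fin (r-1) → BraidGroup r)) := by
    rw [PresentedGroup.closure_range_of]; trivial
  refine Subgroup.closure_induction
    (p := fun x _ => ∀ (h : G) (g : Fin r → G),
      φ x (diagConj h g) = diagConj h (φ x g)) ?_ ?_ ?_ ?_ hb h g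
  · rintro x ⟨m, rfl⟩ h g; rw [hφ, hφ]; exact braidMove_diagConj _ _ _
  · intro h g; rw [map_one, Equiv.Perm.one_apply, Equiv.Perm.one_apply]
  · intro x y _ _ ihx ihy h g
    rw [map_mul, Equiv.Perm.mul_apply, Equiv.Perm.mul_apply, ihy, ihx]
  · intro x _ ih h g
    have h1 := ih h (φ x⁻¹ g)
    rw [← Equiv.Perm.mul_apply, ← map_mul, mul_inv_cancel, map_one,
      Equiv.Perm.one_apply] at h1
    have h2 := congrArg (φ x⁻¹) h1
    rw [← Equiv.Perm.mul_apply, ← map_mul, inv_mul_cancel, map_one,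
      Equiv.Perm.one_apply] at h2
    exact h2.symm

private lemma phi_left_fix (k : ℕ) (l : BraidGroup r)
    (hl : l ∈ Subgroup.closure (LkGens r k)) (g : Fin r → G) (j : Fin r)
    (hj : k ≤ (j : ℕ)) : φ l g j = g j := by
  refine Subgroup.closure_induction
    (p := fun x _ => ∀ (g : Fin r → G) (j : Fin r), k ≤ (j : ℕ) → φ x g j = g j)
    ?_ ?_ ?_ ?_ hl g j hj
  · rintro x ⟨m, hm, rfl⟩ g j hj
    rw [hφ]
    exact braidMove_apply_ne _ g j (by omega) (by omega)
  · intro g j hj; rw [map_one, Equiv.Perm.one_apply]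
  · intro x y _ _ ihx ihy g j hj
    rw [map_mul, Equiv.Perm.mul_apply, ihx _ _ hj, ihy _ _ hj]
  · intro x _ ih g j hj
    have h1 := ih (φ x⁻¹ g) j hj
    rw [← Equiv.Perm.mul_apply, ← map_mul, mul_inv_cancel, map_one,
      Equiv.Perm.one_apply] at h1
    exact h1.symm

private lemma phi_left_drop (k : ℕ) (l : BraidGroup r)
    (hl : l ∈ Subgroup.closure (LkGens r k)) (g : Fin r → G) :
    (List.ofFn (φ l g)).drop k = (List.ofFn g).drop k := by
  apply List.ext_getElem (by simp)
  intro j h1 h2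
  have hj : k + j < r := by simp at h1; omega
  simp only [List.getElem_drop, List.getElem_ofFn]
  exact phi_left_fix φ hφ k l hl g ⟨k + j, hj⟩ (by simp)

private lemma phi_right_drop_prod (k : ℕ) (ρ : BraidGroup r)
    (hρ : ρ ∈ Subgroup.closure (RkGens r k)) (g : Fin r → G) :
    ((List.ofFn (φ ρ g)).drop k).prod = ((List.ofFn g).drop k).prod := by
  refine Subgroup.closure_induction
    (p := fun x _ => ∀ g : Fin r → G,
      ((List.ofFn (φ x g)).drop k).prod = ((List.ofFn g).drop k).prod) ?_ ?_ ?_ ?_ hρ g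
  · rintro x ⟨m, hm, rfl⟩ g
    rw [hφ]
    exact braidMove_drop_prod _ _ hm g
  · intro g; rw [map_one, Equiv.Perm.one_apply]
  · intro x y _ _ ihx ihy g
    rw [map_mul, Equiv.Perm.mul_apply, ihx, ihy]
  · intro x _ ih g
    have h1 := ih (φ x⁻¹ g)
    rw [← Equiv.Perm.mul_apply, ← map_mul, mul_inv_cancel, map_one,
      Equiv.Perm.one_apply] at h1
    exact h1.symm

end Phi

end ShadowAux
/-- Level-`k` setup as before.  Let `N` be a node whose nodal type is the conjugacy class
`C` (that is, the tail product `g_{k+1} ⋯ g_r` lies in `C` for every tuple of `N`), and fix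
`x₀ ∈ C`.  Then the shadow `N₀` of `N` (its tuples with tail product exactly `x₀`) is a
single orbit of `L_k × R_k × C_G(x₀)`, and for every tuple of `N₀` its head lies in the
shadow `H₀` of the head orbit of `N` and its tail lies in the shadow `T₀` of the tail orbit
of `N`. -/
theorem node_shadow_is_orbit_and_lies_in_head_tail_shadows
    {G : Type*} [Group G] [Fintype G] {r : ℕ} (hr : 2 ≤ r)
    (C' : Fin r → Set G)
    (hC' : ∀ m : Fin r, ∃ x : G, C' m = {y | IsConj x y})
    (hord : ∀ i j k : Fin r, i ≤ k → k ≤ j → C' i = C' j → C' k = C' i)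
    (π : BraidGroup r →* Equiv.Perm (Fin r))
    (hπ : ∀ m : Fin (r - 1),
      π (PresentedGroup.of m) =
        Equiv.swap ⟨(m : ℕ), by have := m.isLt; omega⟩
          ⟨(m : ℕ) + 1, by have := m.isLt; omega⟩)
    (φ : BraidGroup r →* Equiv.Perm (Fin r → G))
    (hφ : ∀ (m : Fin (r - 1)) (g : Fin r → G),
      φ (PresentedGroup.of m) g = braidMove (m : ℕ) g)
    (k : ℕ) (hk1 : 1 < k) (hk2 : k < r)
    (x₀ : G) (C : Set G) (hx₀ : x₀ ∈ C) (hCclass : C = {y | IsConj x₀ y})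
    (N : Set (Fin r → G)) (hN : IsNode C' π φ k N)
    (htype : ∀ g ∈ N, ((List.ofFn g).drop k).prod ∈ C) :
    (∃ τ₀ ∈ {g ∈ N | ((List.ofFn g).drop k).prod = x₀},
      {g ∈ N | ((List.ofFn g).drop k).prod = x₀} =
        {τ | ∃ l ρ : BraidGroup r, inLk C' π k l ∧ inRk C' π k ρ ∧
          ∃ c ∈ Subgroup.centralizer {x₀}, τ = diagConj c (φ (l * ρ) τ₀)}) ∧
    (∀ g ∈ {g ∈ N | ((List.ofFn g).drop k).prod = x₀},
      (headOf hk2.le g ∈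
        {t | (∃ g' ∈ N, t = headOf hk2.le g') ∧ t ⟨k, Nat.lt_succ_self k⟩ = x₀}) ∧
      (tailOf hk2.le g ∈
        {t | (∃ g' ∈ N, t = tailOf hk2.le g') ∧ t ⟨0, by omega⟩ = x₀⁻¹})) := by

  obtain ⟨τ₀, hτ₀T, hNeq⟩ := hN
  have hmemN : ∀ (l ρ : BraidGroup r), inLk C' π k l → inRk C' π k ρ → ∀ h : G,
      diagConj h (φ (l * ρ) τ₀) ∈ N := by
    intro l ρ hl hρ h; rw [hNeq]; exact ⟨l, ρ, hl, hρ, h, rfl⟩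
  have hone_l : inLk C' π k 1 :=
    ⟨one_mem _, fun m => by rw [map_one, Equiv.Perm.one_apply]⟩
  have hone_r : inRk C' π k 1 :=
    ⟨one_mem _, fun m => by rw [map_one, Equiv.Perm.one_apply]⟩
  have hτ₀N : τ₀ ∈ N := by
    have := hmemN 1 1 hone_l hone_r 1
    rwa [one_mul, map_one, Equiv.Perm.one_apply, diagConj_one] at this
  have hdpφ : ∀ (l ρ : BraidGroup r), l ∈ Subgroup.closure (LkGens r k) →
      ρ ∈ Subgroup.closure (RkGens r k) → ∀ g : Fin r → G,
      ((List.ofFn (φ (l * ρ) g)).drop k).prod = ((List.ofFn g).drop k).prod := by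
    intro l ρ hl hρ g
    rw [map_mul, Equiv.Perm.mul_apply, phi_left_drop φ hφ k l hl,
      phi_right_drop_prod φ hφ k ρ hρ]
  have hprodN : ∀ g ∈ N, (List.ofFn g).prod = 1 := by
    intro g hg
    rw [hNeq] at hg
    obtain ⟨l, ρ, hl, hρ, h, rfl⟩ := hg
    rw [prod_ofFn_diagConj, phi_prod φ hφ, hτ₀T.2.1, mul_one, inv_mul_cancel]
  have hconj : IsConj x₀ (((List.ofFn τ₀).drop k).prod) := by
    have := htype τ₀ hτ₀N
    rwa [hCclass] at this
  obtain ⟨u, hu⟩ := isConj_iff.mp hconj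
  have hτ₁N : diagConj u τ₀ ∈ N := by
    have := hmemN 1 1 hone_l hone_r u
    rwa [one_mul, map_one, Equiv.Perm.one_apply] at this
  have hdpτ₁ : ((List.ofFn (diagConj u τ₀)).drop k).prod = x₀ := by
    rw [drop_prod_ofFn_diagConj, ← hu]; group
  have hdpτ : ∀ (l ρ : BraidGroup r), inLk C' π k l → inRk C' π k ρ → ∀ c : G,
      ((List.ofFn (diagConj c (φ (l * ρ) (diagConj u τ₀)))).drop k).prod
        = c⁻¹ * x₀ * c := by
    intro l ρ hl hρ c
    rw [drop_prod_ofFn_diagConj, hdpφ l ρ hl.1 hρ.1, hdpτ₁]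
  have hrepr : ∀ (b : BraidGroup r) (h : G),
      diagConj h (φ b τ₀) = diagConj (u⁻¹ * h) (φ b (diagConj u τ₀)) := by
    intro b h
    rw [phi_diagConj φ hφ, diagConj_diagConj]
    congr 1; group
  have hrepr' : ∀ (b : BraidGroup r) (c : G),
      diagConj c (φ b (diagConj u τ₀)) = diagConj (u * c) (φ b τ₀) := by
    intro b c
    rw [phi_diagConj φ hφ, diagConj_diagConj]
  constructor
  · refine ⟨diagConj u τ₀, ⟨hτ₁N, hdpτ₁⟩, ?_⟩
    ext τ
    constructor
    · rintro ⟨hτN, hτdp⟩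
      rw [hNeq] at hτN
      obtain ⟨l, ρ, hl, hρ, h, rfl⟩ := hτN
      refine ⟨l, ρ, hl, hρ, u⁻¹ * h, ?_, hrepr (l * ρ) h⟩
      have heq : (u⁻¹ * h)⁻¹ * x₀ * (u⁻¹ * h) = x₀ := by
        rw [← hdpτ l ρ hl hρ (u⁻¹ * h), ← hrepr (l * ρ) h]
        exact hτdp
      refine Subgroup.mem_centralizer_iff.mpr ?_
      intro y hy
      rw [(hy : y = x₀)]
      calc x₀ * (u⁻¹ * h) = (u⁻¹ * h) * ((u⁻¹ * h)⁻¹ * x₀ * (u⁻¹ * h)) := by group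
        _ = (u⁻¹ * h) * x₀ := by rw [heq]
    · rintro ⟨l, ρ, hl, hρ, c, hc, rfl⟩
      have hxc : x₀ * c = c * x₀ :=
        Subgroup.mem_centralizer_iff.mp hc x₀ rfl
      refine ⟨?_, ?_⟩
      · rw [hrepr' (l * ρ) c]
        exact hmemN l ρ hl hρ (u * c)
      · rw [hdpτ l ρ hl hρ c]
        calc c⁻¹ * x₀ * c = c⁻¹ * (x₀ * c) := by group
          _ = c⁻¹ * (c * x₀) := by rw [hxc]
          _ = x₀ := by group
  · intro g hg
    obtain ⟨hgN, hgdp⟩ := hg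
    have htake : ((List.ofFn g).take k).prod = x₀⁻¹ := by
      have h1 := List.prod_take_mul_prod_drop (List.ofFn g) k
      rw [hprodN g hgN, hgdp] at h1
      exact eq_inv_of_mul_eq_one_left h1
    refine ⟨⟨⟨g, hgN, rfl⟩, ?_⟩, ⟨⟨g, hgN, rfl⟩, ?_⟩⟩
    · show (if h : ((⟨k, Nat.lt_succ_self k⟩ : Fin (k+1)) : ℕ) < k then _ else _) = x₀
      rw [dif_neg (lt_irrefl k), htake, inv_inv]
    · show (if _h : ((⟨0, by omega⟩ : Fin (r - k + 1)) : ℕ) = 0 then _ else _) = x₀⁻¹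
      rw [dif_pos rfl, htake]
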